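/- Let β ≥ 1 be an integer, let k ≥ 0 be an integer, and define f : ℝ∖{0} → ℝ by f(a) = Q̃_{β,k}(a) / a^{2β}. Then for every real a ≠ 0, 2 f''(a) + 4(β/a + 1) f'(a) + (4β/a) f(a) = −(4k / a^{2β+1}) Q̃_{β,k}(a). -/
import Mathlib


open Finset

/-- The signed polynomial
`Q̃_{β,k}(x) = Σ_{l=0}^{β-k-1} (−1)^{l+k} (β+l+k−1)!/((β−l−k−1)! l!) 2^{−l} x^{β−l−k}`
(the empty sum when `k ≥ β`), as a function on `ℝ`. -/
noncomputable def Qtilde (β k : ℕ) (x : ℝ) : ℝ :=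
  ∑ l ∈ Finset.range (β - k),
    (-1 : ℝ) ^ (l + k) * (Nat.factorial (β + l + k - 1) : ℝ) /
      (Nat.factorial (β - l - k - 1) * Nat.factorial l) * (1 / 2) ^ l * x ^ (β - l - k)

noncomputable def qc (β k l : ℕ) : ℝ :=
  (-1 : ℝ) ^ (l + k) * (Nat.factorial (β + l + k - 1) : ℝ) /
      (Nat.factorial (β - l - k - 1) * Nat.factorial l) * (1 / 2) ^ l

def qz (β k l : ℕ) : ℤ := -((β : ℤ) + l + k)

noncomputable def qg (β k : ℕ) (t : ℝ) : ℝ :=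
  ∑ l ∈ Finset.range (β - k), qc β k l * t ^ (qz β k l)

noncomputable def qg1 (β k : ℕ) (t : ℝ) : ℝ :=
  ∑ l ∈ Finset.range (β - k), qc β k l * ((qz β k l : ℝ) * t ^ (qz β k l - 1))

noncomputable def qg2 (β k : ℕ) (t : ℝ) : ℝ :=
  ∑ l ∈ Finset.range (β - k),
    qc β k l * ((qz β k l : ℝ) * ((qz β k l - 1 : ℤ) * t ^ (qz β k l - 2)))

lemma qf_eq (β k : ℕ) (t : ℝ) (ht : t ≠ 0) :
    Qtilde β k t / t ^ (2 * β) = qg β k t := by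
  unfold Qtilde qg
  rw [Finset.sum_div]
  refine Finset.sum_congr rfl fun l hl => ?_
  have hlk : l + k < β := by have := Finset.mem_range.mp hl; omega
  rw [mul_div_assoc]
  have hz : t ^ (β - l - k) / t ^ (2 * β) = t ^ qz β k l := by
    rw [← zpow_natCast t (β - l - k), ← zpow_natCast t (2 * β), ← zpow_sub₀ ht]
    congr 1
    have : ((β - l - k : ℕ) : ℤ) = (β : ℤ) - l - k := by
      push_cast [Nat.cast_sub (by omega : l + k ≤ β)]; omega
    simp only [qz]; omega
  rw [hz]; rfl

lemma deriv_qg (β k : ℕ) (t : ℝ) (ht : t ≠ 0) : deriv (qg β k) t = qg1 β k t := by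
  unfold qg qg1
  rw [deriv_fun_sum fun l _ => ((differentiableAt_zpow.mpr (Or.inl ht)).const_mul _)]
  refine Finset.sum_congr rfl fun l hl => ?_
  rw [deriv_const_mul _ (differentiableAt_zpow.mpr (Or.inl ht)), deriv_zpow]

lemma deriv_qg1 (β k : ℕ) (t : ℝ) (ht : t ≠ 0) : deriv (qg1 β k) t = qg2 β k t := by
  unfold qg1 qg2
  rw [deriv_fun_sum fun l _ =>
    (((differentiableAt_zpow.mpr (Or.inl ht)).const_mul _).const_mul _)]
  refine Finset.sum_congr rfl fun l hl => ?_
  rw [deriv_const_mul _ ((differentiableAt_zpow.mpr (Or.inl ht)).const_mul _),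
    deriv_const_mul _ (differentiableAt_zpow.mpr (Or.inl ht)), deriv_zpow]
  ring

lemma qc_rec (β k l : ℕ) (h : l + k + 2 ≤ β) :
    qc β k l * (2 * ((β : ℝ) + l + k) * ((l : ℝ) + k + 1 - β)) =
      4 * ((l : ℝ) + 1) * qc β k (l + 1) := by
  obtain ⟨d, rfl⟩ := Nat.exists_eq_add_of_le h
  simp only [qc,
    show l + k + 2 + d + l + k - 1 = 2 * l + 2 * k + d + 1 by omega,
    show l + k + 2 + d - l - k - 1 = d + 1 by omega,
    show l + k + 2 + d + (l + 1) + k - 1 = (2 * l + 2 * k + d + 1) + 1 by omega,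
    show l + k + 2 + d - (l + 1) - k - 1 = d by omega,
    Nat.factorial_succ (2 * l + 2 * k + d + 1), Nat.factorial_succ l,
    Nat.factorial_succ d,
    show l + 1 + k = (l + k) + 1 by omega, pow_succ]
  have h1 : (Nat.factorial (2 * l + 2 * k + d + 1) : ℝ) ≠ 0 :=
    Nat.cast_ne_zero.mpr (Nat.factorial_ne_zero _)
  have h2 : (Nat.factorial d : ℝ) ≠ 0 := Nat.cast_ne_zero.mpr (Nat.factorial_ne_zero _)
  have h3 : (Nat.factorial l : ℝ) ≠ 0 := Nat.cast_ne_zero.mpr (Nat.factorial_ne_zero _)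
  have h4 : (d : ℝ) + 1 ≠ 0 := by positivity
  have h5 : (l : ℝ) + 1 ≠ 0 := by positivity
  push_cast
  field_simp
  ring

lemma key_sum (β k : ℕ) (a : ℝ) (ha : a ≠ 0) :
    ∑ l ∈ Finset.range (β - k),
        qc β k l * (2 * ((β : ℝ) + l + k) * ((l : ℝ) + k + 1 - β)) * a ^ (qz β k l - 2) =
      ∑ l ∈ Finset.range (β - k), qc β k l * (4 * (l : ℝ)) * a ^ (qz β k l - 1) := by
  rcases Nat.eq_zero_or_pos (β - k) with hm | hm
  · simp [hm]
  obtain ⟨M, hM⟩ : ∃ M, β - k = M + 1 := ⟨β - k - 1, by omega⟩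
  have hkβ : k + 1 ≤ β := by omega
  rw [hM, Finset.sum_range_succ, Finset.sum_range_succ']
  have hlast : qc β k M * (2 * ((β : ℝ) + M + k) * ((M : ℝ) + k + 1 - β)) *
      a ^ (qz β k M - 2) = 0 := by
    have : (M : ℝ) + k + 1 - β = 0 := by
      have : ((M : ℕ) : ℝ) = (β : ℝ) - k - 1 := by
        have : M = β - k - 1 := by omega
        subst this
        rw [Nat.cast_sub (by omega : 1 ≤ β - k), Nat.cast_sub (by omega : k ≤ β)]
        push_cast
        ring
      rw [this]; ring
    rw [this]; ring
  rw [hlast, add_zero]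
  have hzero : qc β k 0 * (4 * ((0 : ℕ) : ℝ)) * a ^ (qz β k 0 - 1) = 0 := by
    simp
  rw [hzero, add_zero]
  refine Finset.sum_congr rfl fun l hl => ?_
  have hl' : l < M := Finset.mem_range.mp hl
  have hrec := qc_rec β k l (by omega)
  have hzz : qz β k (l + 1) - 1 = qz β k l - 2 := by simp only [qz]; push_cast; ring
  rw [hzz]
  push_cast
  linear_combination a ^ (qz β k l - 2) * hrec

/-- for integers `β ≥ 1`, `k ≥ 0` and `f(a) = Q̃_{β,k}(a)/a^{2β}`, for
every real `a ≠ 0` one has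
`2 f''(a) + 4(β/a + 1) f'(a) + (4β/a) f(a) = −(4k/a^{2β+1}) Q̃_{β,k}(a)`. -/
theorem statement10 (β k : ℕ) (hβ : 1 ≤ β) (a : ℝ) (ha : a ≠ 0) :
    2 * deriv (deriv (fun t : ℝ => Qtilde β k t / t ^ (2 * β))) a +
        4 * ((β : ℝ) / a + 1) * deriv (fun t : ℝ => Qtilde β k t / t ^ (2 * β)) a +
        (4 * (β : ℝ) / a) * (Qtilde β k a / a ^ (2 * β)) =
      -(4 * (k : ℝ) / a ^ (2 * β + 1)) * Qtilde β k a := by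
  have hopen : ∀ᶠ t in nhds a, t ≠ (0 : ℝ) := eventually_ne_nhds ha
  have hFg : (fun t : ℝ => Qtilde β k t / t ^ (2 * β)) =ᶠ[nhds a] qg β k :=
    hopen.mono fun t ht => qf_eq β k t ht
  have hd1 : deriv (fun t : ℝ => Qtilde β k t / t ^ (2 * β)) a = qg1 β k a := by
    rw [hFg.deriv_eq, deriv_qg β k a ha]
  have hgg1 : deriv (qg β k) =ᶠ[nhds a] qg1 β k := hopen.mono fun t ht => deriv_qg β k t ht
  have hd2 : deriv (deriv (fun t : ℝ => Qtilde β k t / t ^ (2 * β))) a = qg2 β k a := by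
    rw [(hFg.deriv.trans hgg1).deriv_eq, deriv_qg1 β k a ha]
  have hQ : Qtilde β k a = qg β k a * a ^ (2 * β) := by
    rw [← qf_eq β k a ha, div_mul_cancel₀ _ (pow_ne_zero _ ha)]
  rw [hd1, hd2, qf_eq β k a ha, hQ]
  have hR : -(4 * (k : ℝ) / a ^ (2 * β + 1)) * (qg β k a * a ^ (2 * β)) =
      -(4 * (k : ℝ) / a) * qg β k a := by
    rw [pow_succ]
    field_simp
  rw [hR]
  have hk := key_sum β k a ha
  rw [← sub_eq_zero, ← Finset.sum_sub_distrib] at hk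
  rw [← sub_eq_zero]
  unfold qg qg1 qg2
  rw [Finset.mul_sum, Finset.mul_sum, Finset.mul_sum, Finset.mul_sum,
    ← Finset.sum_add_distrib, ← Finset.sum_add_distrib, ← Finset.sum_sub_distrib]
  rw [← hk]
  refine Finset.sum_congr rfl fun l hl => ?_
  have e2 : a ^ (qz β k l - 1) = a ^ (qz β k l - 2) * a := by
    rw [← zpow_add_one₀ ha]; congr 1; ring
  have e1 : a ^ (qz β k l) = a ^ (qz β k l - 2) * a * a := by
    rw [← zpow_add_one₀ ha, ← zpow_add_one₀ ha]; congr 1; ring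
  have hz1 : ((qz β k l : ℤ) : ℝ) = -((β : ℝ) + l + k) := by
    simp only [qz]; push_cast; ring
  rw [e1, e2]
  push_cast [hz1]
  field_simp
  ring
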